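/- Let μ > 0 and define f(t,r) = μ(T−t)·M(T−t,r) on [0,T] × ℝ. Then for every (t,r) ∈ (0,T) × ℝ, ∂_t f(t,r) + a(b−r)·∂_r f(t,r) + (δ²/2)·∂_{rr} f(t,r) − r·f(t,r) = −μ·M(T−t,r). Moreover f(T,r) = 0 for all r, for every t ∈ [0,T) one has lim_{r→∞} f(t,r) = 0 and lim_{r→−∞} f(t,r) = ∞, and f(t, α(t)) = μ(T−t) for every t ∈ [0,T). -/

import Mathlib

open Real Filter

noncomputable def M (a δ b u r : ℝ) : ℝ :=
  Real.exp (-(b - δ^2/(2*a^2))*u + ((b - δ^2/(2*a^2)) - r)/a * (1 - Real.exp (-(a*u)))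
    - δ^2/(4*a^3) * (1 - Real.exp (-(a*u)))^2)

/-- The separating curve `α(t)`. -/
noncomputable def alphaCurve (a δ b T t : ℝ) : ℝ :=
  (b - δ^2/(2*a^2)) * (1 - a*(T - t)/(1 - Real.exp (-(a*(T - t)))))
    - δ^2/(4*a^2) * (1 - Real.exp (-(a*(T - t))))

/-!
`M` is the Vasicek zero-coupon bond price: `M(u, r) = exp (A(u) - B(u) r)` with
`B(u) = (1 - e^{-au})/a`, `B' = 1 - aB`, and `A' = -abB + δ²B²/2`. Differentiating the exponent
shows that `M` solves the pricing equation `∂_u M = a(b - r) ∂_r M + (δ²/2) ∂_rr M - r M`, and the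
product rule applied to `μ(T - t) M(T - t, r)` leaves exactly the source term `-μ M(T - t, r)`.
For `u > 0` we have `B(u) > 0`, which gives the limits in `r`, and `α(t)` is the value of `r` at
which the exponent `A - B r` vanishes.
-/

noncomputable def vasicekB (a u : ℝ) : ℝ := (1 - exp (-(a * u))) / a

noncomputable def vasicekA (a δ b u : ℝ) : ℝ :=
  -(b - δ ^ 2 / (2 * a ^ 2)) * u + (b - δ ^ 2 / (2 * a ^ 2)) * vasicekB a u
    - δ ^ 2 / (4 * a) * vasicekB a u ^ 2

section Vasicek

variable {a : ℝ}

lemma hasDerivAt_vasicekB (ha : a ≠ 0) (u : ℝ) :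
    HasDerivAt (vasicekB a) (1 - a * vasicekB a u) u := by
  refine ((((hasDerivAt_id' u).const_mul a).fun_neg.exp.const_sub 1).div_const a).congr_deriv ?_
  simp only [vasicekB]
  field_simp
  ring

lemma vasicekB_pos (ha : 0 < a) {u : ℝ} (hu : 0 < u) : 0 < vasicekB a u :=
  div_pos (sub_pos.2 (exp_lt_one_iff.2 (by nlinarith))) ha

lemma hasDerivAt_vasicekA (ha : a ≠ 0) (δ b u : ℝ) :
    HasDerivAt (vasicekA a δ b) (-a * b * vasicekB a u + δ ^ 2 / 2 * vasicekB a u ^ 2) u := by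
  have hB := hasDerivAt_vasicekB ha u
  refine ((((hasDerivAt_id' u).const_mul (-(b - δ ^ 2 / (2 * a ^ 2)))).add
    (hB.const_mul (b - δ ^ 2 / (2 * a ^ 2)))).sub
      ((hB.pow 2).const_mul (δ ^ 2 / (4 * a)))).congr_deriv ?_
  field_simp
  ring

variable (δ b : ℝ)

lemma M_eq_exp (ha : a ≠ 0) (u r : ℝ) :
    M a δ b u r = exp (vasicekA a δ b u - vasicekB a u * r) := by
  simp only [M, vasicekA, vasicekB]
  congr 1
  field_simp
  ring

lemma hasDerivAt_M_right (ha : a ≠ 0) (u r : ℝ) :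
    HasDerivAt (M a δ b u) (-vasicekB a u * M a δ b u r) r := by
  simp only [funext (M_eq_exp δ b ha u)]
  refine (((hasDerivAt_id' r).const_mul (vasicekB a u)).const_sub _).exp.congr_deriv ?_
  ring

lemma deriv_M_right (ha : a ≠ 0) (u : ℝ) :
    deriv (M a δ b u) = fun r => -vasicekB a u * M a δ b u r :=
  funext fun r => (hasDerivAt_M_right δ b ha u r).deriv

lemma deriv_deriv_M_right (ha : a ≠ 0) (u : ℝ) :
    deriv (deriv (M a δ b u)) = fun r => vasicekB a u ^ 2 * M a δ b u r := by
  rw [deriv_M_right δ b ha, deriv_const_mul_field', deriv_M_right δ b ha]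
  ext r
  ring

lemma hasDerivAt_M_maturity (ha : a ≠ 0) (u r : ℝ) :
    HasDerivAt (fun u => M a δ b u r)
      (a * (b - r) * deriv (M a δ b u) r + δ ^ 2 / 2 * deriv (deriv (M a δ b u)) r
        - r * M a δ b u r) u := by
  rw [deriv_deriv_M_right δ b ha, deriv_M_right δ b ha]
  simp only [M_eq_exp δ b ha]
  refine ((hasDerivAt_vasicekA ha δ b u).fun_sub
    ((hasDerivAt_vasicekB ha u).mul_const r)).exp.congr_deriv ?_
  ring

lemma tendsto_M_atTop (ha : 0 < a) {u : ℝ} (hu : 0 < u) :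
    Tendsto (M a δ b u) atTop (nhds 0) := by
  simp only [funext (M_eq_exp δ b ha.ne' u)]
  have h := tendsto_atBot_add_const_left _ (vasicekA a δ b u) <|
    tendsto_id.const_mul_atTop_of_neg (neg_lt_zero.2 (vasicekB_pos ha hu))
  simp only [id, neg_mul, ← sub_eq_add_neg] at h
  exact tendsto_exp_atBot.comp h

lemma tendsto_M_atBot (ha : 0 < a) {u : ℝ} (hu : 0 < u) :
    Tendsto (M a δ b u) atBot atTop := by
  simp only [funext (M_eq_exp δ b ha.ne' u)]
  have h := tendsto_atTop_add_const_left _ (vasicekA a δ b u) <|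
    tendsto_id.const_mul_atBot_of_neg (neg_lt_zero.2 (vasicekB_pos ha hu))
  simp only [id, neg_mul, ← sub_eq_add_neg] at h
  exact tendsto_exp_atTop.comp h

end Vasicek

lemma M_alphaCurve {a : ℝ} (ha : a ≠ 0) (δ b : ℝ) {T t : ℝ} (ht : t ≠ T) :
    M a δ b (T - t) (alphaCurve a δ b T t) = 1 := by
  have hE : 1 - exp (-(a * (T - t))) ≠ 0 := by
    rw [sub_ne_zero, ne_comm, Ne, exp_eq_one_iff, neg_eq_zero]
    exact mul_ne_zero ha (sub_ne_zero.2 ht.symm)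
  rw [M, exp_eq_one_iff, alphaCurve]
  field_simp
  ring

theorem muTM_properties_general (a δ b T μ : ℝ) (ha : 0 < a)
    (hμ : 0 < μ) :
    (∀ t : ℝ, 0 < t → t < T → ∀ r : ℝ,
      deriv (fun t' => μ*(T - t')*M a δ b (T - t') r) t
        + a*(b - r) * deriv (fun r' => μ*(T - t)*M a δ b (T - t) r') r
        + δ^2/2 * deriv (deriv (fun r' => μ*(T - t)*M a δ b (T - t) r')) r
        - r * (μ*(T - t)*M a δ b (T - t) r)
        = -(μ * M a δ b (T - t) r)) ∧
    (∀ r : ℝ, μ*(T - T)*M a δ b (T - T) r = 0) ∧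
    (∀ t : ℝ, 0 ≤ t → t < T →
      Tendsto (fun r => μ*(T - t)*M a δ b (T - t) r) atTop (nhds 0) ∧
      Tendsto (fun r => μ*(T - t)*M a δ b (T - t) r) atBot atTop) ∧
    (∀ t : ℝ, 0 ≤ t → t < T →
      μ*(T - t)*M a δ b (T - t) (alphaCurve a δ b T t) = μ*(T - t)) := by
  refine ⟨fun t _ _ r => ?_, fun r => by simp, fun t _ ht => ?_, fun t _ ht => ?_⟩
  · have hf := (((hasDerivAt_id' t).const_sub T).const_mul μ).fun_mul
      ((hasDerivAt_M_maturity δ b ha.ne' (T - t) r).comp_const_sub T t)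
    rw [hf.deriv]
    simp only [deriv_const_mul_field']
    ring
  · have hu : 0 < T - t := sub_pos.2 ht
    refine ⟨?_, (tendsto_M_atBot δ b ha hu).const_mul_atTop (mul_pos hμ hu)⟩
    simpa using (tendsto_M_atTop δ b ha hu).const_mul (μ * (T - t))
  · rw [M_alphaCurve ha.ne' δ b ht.ne, mul_one]

/-- with `f(t,r) = μ(T−t)M(T−t,r)`:
`∂_t f + a(b−r)∂_r f + (δ²/2)∂_{rr} f − rf = −μM(T−t,r)` on `(0,T) × ℝ`;
`f(T,r) = 0`; `lim_{r→∞} f(t,r) = 0` and `lim_{r→−∞} f(t,r) = ∞` for `t ∈ [0,T)`;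
and `f(t,α(t)) = μ(T−t)` for `t ∈ [0,T)`. -/
theorem muTM_properties (a δ b T μ : ℝ) (ha : 0 < a) (hδ : 0 < δ) (hT : 0 < T)
    (hμ : 0 < μ) :
    (∀ t : ℝ, 0 < t → t < T → ∀ r : ℝ,
      deriv (fun t' => μ*(T - t')*M a δ b (T - t') r) t
        + a*(b - r) * deriv (fun r' => μ*(T - t)*M a δ b (T - t) r') r
        + δ^2/2 * deriv (deriv (fun r' => μ*(T - t)*M a δ b (T - t) r')) r
        - r * (μ*(T - t)*M a δ b (T - t) r)
        = -(μ * M a δ b (T - t) r)) ∧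
    (∀ r : ℝ, μ*(T - T)*M a δ b (T - T) r = 0) ∧
    (∀ t : ℝ, 0 ≤ t → t < T →
      Tendsto (fun r => μ*(T - t)*M a δ b (T - t) r) atTop (nhds 0) ∧
      Tendsto (fun r => μ*(T - t)*M a δ b (T - t) r) atBot atTop) ∧
    (∀ t : ℝ, 0 ≤ t → t < T →
      μ*(T - t)*M a δ b (T - t) (alphaCurve a δ b T t) = μ*(T - t)) :=
  muTM_properties_general a δ b T μ ha hμ
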